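/- Let d = 2m+1 be odd, let U, w ≥ 1 and γ ∈ (0,1) satisfy w·γ² ≥ 3, and let f : Fin U → ℕ be a frequency function with total count N = Σ_y f(y) ≥ 1; fix an item x ∈ Fin U. Let (h_r(y))_{r ∈ Fin d, y ∈ Fin U} be i.i.d. uniform on Fin w and (g_r(y))_{r ∈ Fin d, y ∈ Fin U} be i.i.d. uniform on {−1,+1}, mutually independent. Define the CountSketch estimate f̃(x) = median_{r ∈ Fin d} g_r(x)·Σ_{y ∈ Fin U} f(y)·g_r(y)·1{h_r(y) = h_r(x)}. Then P( |f̃(x) − f(x)| > γ·N ) ≤ exp(−d/18). -/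

import Mathlib

/-!
Row `r` of the sketch errs by `g_r(x) · Σ_{y ≠ x} f(y) g_r(y) 1{h_r(y) = h_r(x)}`. The random
signs make these summands orthogonal, so the error has second moment `Σ_{y ≠ x} f(y)²/w ≤ N²/w`
and, by Chebyshev, exceeds `γN` with probability at most `1/(wγ²) ≤ 1/3`. The rows are
independent, and since at least `m + 1` entries lie on each side of a median, a median error
above `γN` forces at least `m + 1` bad rows. Markov's inequality for `2^#(bad rows)`, whose
mean is `∏_r (1 + P(row r bad)) ≤ (4/3)^(2m+1)`, bounds the probability of this by
`(4/3)^(2m+1) / 2^(m+1) ≤ e^(-(2m+1)/18)`.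
-/

open MeasureTheory ProbabilityTheory Real
open scoped ENNReal NNReal

/-- The median of a tuple of `2m+1` reals: its `(m+1)`-st smallest entry with multiplicity. -/
noncomputable def median {m : ℕ} (a : Fin (2 * m + 1) → ℝ) : ℝ :=
  (Multiset.sort (Multiset.map a Finset.univ.val) (· ≤ ·))[m]'(by
    simp [Multiset.length_sort]; omega)

/-- Codomain of the combined family: hash values live in `Fin w`, sign values in `ℝ`. -/
def Codom (ι : Type) (w : ℕ) : ι ⊕ ι → Type
  | .inl _ => Fin w
  | .inr _ => ℝ

instance {ι : Type} {w : ℕ} (i : ι ⊕ ι) : MeasurableSpace (Codom ι w i) :=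
  match i with
  | .inl _ => inferInstanceAs (MeasurableSpace (Fin w))
  | .inr _ => inferInstanceAs (MeasurableSpace ℝ)

/-- The combined family of the hash variables and the sign variables. -/
def Vars {Ω : Type*} {ι : Type} {w : ℕ} (H : ι → Ω → Fin w) (G : ι → Ω → ℝ) :
    ∀ i : ι ⊕ ι, Ω → Codom ι w i
  | .inl p => H p
  | .inr p => G p

open Finset Function

section Median

lemma card_filter_eq_countP_sort {α : Type*} [Fintype α] (a : α → ℝ) (p : ℝ → Prop)
    [DecidablePred p] :
    #{r | p (a r)} = (Multiset.sort (Multiset.map a univ.val) (· ≤ ·)).countP p := by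
  rw [← Multiset.coe_countP, Multiset.sort_eq, Multiset.countP_map]
  rfl

variable {m : ℕ} (a : Fin (2 * m + 1) → ℝ)

lemma le_card_filter_median_le : m + 1 ≤ #{r | median a ≤ a r} := by
  rw [card_filter_eq_countP_sort a (median a ≤ ·)]
  set l := Multiset.sort (Multiset.map a univ.val) (· ≤ ·)
  have hl : l.length = 2 * m + 1 := by simp [l]
  have hsorted :=
    List.pairwise_iff_getElem.1 (Multiset.pairwise_sort (Multiset.map a univ.val) (· ≤ ·))
  calc m + 1 = (l.drop m).length := by simp [hl]; omega
    _ = (l.drop m).countP (median a ≤ ·) := by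
        refine (List.countP_eq_length.2 fun b hb => ?_).symm
        obtain ⟨i, hi, rfl⟩ := List.mem_iff_getElem.1 hb
        rw [List.getElem_drop]
        rcases i.eq_zero_or_pos with rfl | hi0
        · simp [median, l]
        · exact decide_eq_true (hsorted m (m + i) _ _ (by omega))
    _ ≤ l.countP (median a ≤ ·) := (List.drop_sublist m l).countP_le

lemma le_card_filter_le_median : m + 1 ≤ #{r | a r ≤ median a} := by
  rw [card_filter_eq_countP_sort a (· ≤ median a)]
  set l := Multiset.sort (Multiset.map a univ.val) (· ≤ ·)
  have hl : l.length = 2 * m + 1 := by simp [l]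
  have hsorted :=
    List.pairwise_iff_getElem.1 (Multiset.pairwise_sort (Multiset.map a univ.val) (· ≤ ·))
  calc m + 1 = (l.take (m + 1)).length := by simp [hl]; omega
    _ = (l.take (m + 1)).countP (· ≤ median a) := by
        refine (List.countP_eq_length.2 fun b hb => ?_).symm
        obtain ⟨i, hi, rfl⟩ := List.mem_iff_getElem.1 hb
        rw [List.getElem_take]
        simp only [List.length_take] at hi
        rcases (show i ≤ m by omega).eq_or_lt with rfl | him
        · simp [median, l]
        · exact decide_eq_true (hsorted i m _ _ him)
    _ ≤ l.countP (· ≤ median a) := (List.take_sublist _ l).countP_le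

lemma le_card_filter_lt_abs_sub_of_lt_abs_median_sub {c t : ℝ} (h : t < |median a - c|) :
    m + 1 ≤ #{r | t < |a r - c|} := by
  rcases lt_abs.1 h with h | h
  · refine (le_card_filter_median_le a).trans (card_le_card fun r hr => ?_)
    simp only [mem_filter, mem_univ, true_and] at hr ⊢
    exact lt_abs.2 (Or.inl (by linarith))
  · refine (le_card_filter_le_median a).trans (card_le_card fun r hr => ?_)
    simp only [mem_filter, mem_univ, true_and] at hr ⊢
    exact lt_abs.2 (Or.inr (by linarith))

end Median

section Independence

variable {Ω ι : Type*} {mΩ : MeasurableSpace Ω} {μ : Measure Ω}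

lemma measurable_iSup_comap {β : ι → Type*} [∀ i, MeasurableSpace (β i)] (X : ∀ i, Ω → β i)
    {T : Set ι} {j : ι} (hj : j ∈ T) :
    Measurable[⨆ i ∈ T, MeasurableSpace.comap (X i) inferInstance] (X j) :=
  (comap_measurable (X j)).mono
    (le_iSup₂ (f := fun i (_ : i ∈ T) => MeasurableSpace.comap (X i) inferInstance) j hj) le_rfl

lemma indepFun_of_measurable_iSup_compl {β : ι → Type*} [∀ i, MeasurableSpace (β i)]
    {X : ∀ i, Ω → β i} (hX : ∀ i, Measurable (X i)) (hind : iIndepFun X μ) (j : ι)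
    {γ : Type*} [MeasurableSpace γ] {W : Ω → γ}
    (hW : Measurable[⨆ i ∈ ({j}ᶜ : Set ι), MeasurableSpace.comap (X i) inferInstance] W) :
    IndepFun (X j) W μ := by
  have h := indep_iSup_of_disjoint (fun i => (hX i).comap_le)
    ((iIndepFun_iff_iIndep _ X μ).1 hind) (disjoint_compl_right (a := ({j} : Set ι)))
  simp only [Set.mem_singleton_iff, iSup_iSup_eq_left] at h
  exact indep_of_indep_of_le_right h hW.comap_le

lemma iIndepSet_of_measurableSet_iSup {κ : Type*} {m : ι → MeasurableSpace Ω}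
    (h_le : ∀ i, m i ≤ mΩ) (h_indep : iIndep m μ) {T : κ → Set ι} (hT : Pairwise (Disjoint on T))
    {A : κ → Set Ω} (hA : ∀ k, MeasurableSet[⨆ i ∈ T k, m i] (A k)) : iIndepSet A μ := by
  classical
  have := h_indep.isProbabilityMeasure
  rw [iIndepSet_iff_meas_biInter fun k => iSup₂_le (fun i _ => h_le i) _ (hA k)]
  intro S
  induction S using Finset.induction_on with
  | empty => simp
  | insert k S hk ih =>
    have hS : MeasurableSet[⨆ i ∈ ⋃ l ∈ S, T l, m i] (⋂ l ∈ S, A l) :=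
      Finset.measurableSet_biInter S fun l hl =>
        biSup_mono (f := m) (Set.subset_biUnion_of_mem (u := T) (Finset.mem_coe.2 hl)) _ (hA l)
    have hdisj : Disjoint (T k) (⋃ l ∈ S, T l) :=
      Set.disjoint_iUnion₂_right.2 fun l hl => hT (ne_of_mem_of_not_mem hl hk).symm
    rw [Finset.set_biInter_insert, Finset.prod_insert hk, ← ih]
    exact (Indep_iff _ _ μ).1 (indep_iSup_of_disjoint h_le h_indep hdisj) _ _ (hA k) hS

lemma pow_card_filter_mem_eq_prod [Fintype ι] (A : ι → Set Ω) (ω : Ω)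
    [DecidablePred (ω ∈ A ·)] :
    (2 : ℝ≥0∞) ^ #{i | ω ∈ A i} = ∏ i, (1 + (A i).indicator 1 ω) := by
  have h : ∀ i, 1 + (A i).indicator 1 ω = if ω ∈ A i then (2 : ℝ≥0∞) else 1 := fun i => by
    by_cases hi : ω ∈ A i <;> simp [hi, one_add_one_eq_two]
  simp only [h, Finset.prod_ite, Finset.prod_const, one_pow, mul_one]

/-- Markov's inequality for `2 ^ #{i | ω ∈ A i} = ∏ i, (1 + 1_{A i} ω)`, whose mean is
`∏ i, (1 + μ (A i))` by independence. -/
lemma pow_mul_measure_le_card_filter_mem_le [Fintype ι] {A : ι → Set Ω}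
    (hAm : ∀ i, MeasurableSet (A i)) (hA : iIndepSet A μ) {p : ℝ≥0∞} (hp : ∀ i, μ (A i) ≤ p)
    (k : ℕ) [∀ ω, DecidablePred (ω ∈ A ·)] :
    2 ^ k * μ {ω | k ≤ #{i | ω ∈ A i}} ≤ (1 + p) ^ Fintype.card ι := by
  set F : ι → Ω → ℝ≥0∞ := fun i ω => 1 + (A i).indicator 1 ω
  have hFm : ∀ i, Measurable (F i) := fun i => (measurable_one.indicator (hAm i)).const_add 1
  have hFind : iIndepFun F μ :=
    hA.iIndepFun_indicator.comp (fun _ t => 1 + t) fun _ => measurable_id.const_add 1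
  calc 2 ^ k * μ {ω | k ≤ #{i | ω ∈ A i}}
      ≤ 2 ^ k * μ {ω | 2 ^ k ≤ ∏ i, F i ω} := by
        gcongr with ω
        intro hω
        rw [← pow_card_filter_mem_eq_prod]
        exact pow_le_pow_right₀ one_le_two hω
    _ ≤ ∫⁻ ω, ∏ i, F i ω ∂μ :=
        mul_meas_ge_le_lintegral₀ (Finset.aemeasurable_fun_prod _ fun i _ => (hFm i).aemeasurable) _
    _ = ∏ i, (1 + μ (A i)) := by
        rw [lintegral_prod_eq_prod_lintegral_of_indepFun _ _ hFind hFm]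
        have := hA.isProbabilityMeasure
        simp [F, lintegral_add_left measurable_const, lintegral_indicator_one (hAm _)]
    _ ≤ (1 + p) ^ Fintype.card ι := by
        rw [← Finset.card_univ, ← Finset.prod_const]
        gcongr with i
        exact hp i

end Independence

section Moments

variable {Ω : Type*} [MeasurableSpace Ω] {P : Measure Ω}

lemma ae_sq_eq_one_of_map_eq_rademacher {Z : Ω → ℝ} (hZ : Measurable Z)
    (hlaw : P.map Z = (2 : ℝ≥0∞)⁻¹ • (Measure.dirac 1 + Measure.dirac (-1))) :
    ∀ᵐ ω ∂P, Z ω ^ 2 = 1 := by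
  have hmeas : MeasurableSet {t : ℝ | t ^ 2 = 1} :=
    measurableSet_eq_fun (measurable_id.pow_const 2) measurable_const
  rw [← ae_map_iff hZ.aemeasurable hmeas, hlaw]
  refine Measure.ae_smul_measure ?_ _
  simp

lemma integral_eq_zero_of_map_eq_rademacher {Z : Ω → ℝ} (hZ : Measurable Z)
    (hlaw : P.map Z = (2 : ℝ≥0∞)⁻¹ • (Measure.dirac 1 + Measure.dirac (-1))) :
    ∫ ω, Z ω ∂P = 0 := by
  have hmap : ∫ ω, Z ω ∂P = ∫ t, t ∂(P.map Z) :=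
    (integral_map hZ.aemeasurable aestronglyMeasurable_id).symm
  rw [hmap, hlaw, integral_smul_measure,
    integral_add_measure (integrable_dirac (by simp)) (integrable_dirac (by simp))]
  simp

lemma measure_eq_eq_inv_of_map_eq_uniform [IsProbabilityMeasure P] {w : ℕ} {X Y : Ω → Fin w}
    (hX : Measurable X) (hY : Measurable Y) (hXY : IndepFun X Y P)
    (hlaw : P.map X = (w : ℝ≥0∞)⁻¹ • Measure.count) :
    P {ω | X ω = Y ω} = (w : ℝ≥0∞)⁻¹ := by
  have hfiber : ∀ k, P (X ⁻¹' {k}) = (w : ℝ≥0∞)⁻¹ := fun k => by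
    rw [← Measure.map_apply hX (measurableSet_singleton k), hlaw]
    simp
  have hdiag : {ω | X ω = Y ω} = ⋃ k, X ⁻¹' {k} ∩ Y ⁻¹' {k} := by
    ext ω
    simp [eq_comm]
  rw [hdiag, measure_iUnion (fun k l hkl => ?_) fun k =>
      (hX (measurableSet_singleton k)).inter (hY (measurableSet_singleton k)), tsum_fintype]
  · simp_rw [hXY.measure_inter_preimage_eq_mul _ _ (measurableSet_singleton _)
      (measurableSet_singleton _), hfiber, ← Finset.mul_sum]
    rw [sum_measure_preimage_singleton _ fun k _ => hY (measurableSet_singleton k)]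
    simp
  · exact Disjoint.inter_left' _ (Disjoint.inter_right' _
      (Disjoint.preimage _ (Set.disjoint_singleton.2 hkl)))

lemma integral_sum_sq_of_orthogonal {α : Type*} (s : Finset α) (Y : α → Ω → ℝ)
    (hint : ∀ y ∈ s, ∀ z ∈ s, Integrable (fun ω => Y y ω * Y z ω) P)
    (horth : ∀ y ∈ s, ∀ z ∈ s, y ≠ z → ∫ ω, Y y ω * Y z ω ∂P = 0) :
    ∫ ω, (∑ y ∈ s, Y y ω) ^ 2 ∂P = ∑ y ∈ s, ∫ ω, Y y ω ^ 2 ∂P := by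
  simp_rw [sq, Finset.sum_mul_sum]
  rw [integral_finsetSum _ fun y hy => integrable_finsetSum _ fun z hz => hint y hy z hz]
  refine Finset.sum_congr rfl fun y hy => ?_
  rw [integral_finsetSum _ fun z hz => hint y hy z hz,
    Finset.sum_eq_single_of_mem y hy fun z hz hzy => horth y hy z hz hzy.symm]

lemma measure_lt_abs_le_integral_sq_div [IsFiniteMeasure P] {D : Ω → ℝ}
    (hD : Integrable (fun ω => D ω ^ 2) P) {t : ℝ} (ht : 0 < t) :
    P {ω | t < |D ω|} ≤ ENNReal.ofReal ((∫ ω, D ω ^ 2 ∂P) / t ^ 2) := by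
  have hmarkov :=
    mul_meas_ge_le_integral_of_nonneg (ae_of_all _ fun ω => sq_nonneg (D ω)) hD (t ^ 2)
  calc P {ω | t < |D ω|} ≤ P {ω | t ^ 2 ≤ D ω ^ 2} := measure_mono fun ω (hω : t < |D ω|) =>
        show t ^ 2 ≤ D ω ^ 2 by simpa only [sq_abs] using pow_le_pow_left₀ ht.le hω.le 2
    _ = ENNReal.ofReal (P.real {ω | t ^ 2 ≤ D ω ^ 2}) := (ofReal_measureReal).symm
    _ ≤ ENNReal.ofReal ((∫ ω, D ω ^ 2 ∂P) / t ^ 2) := by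
        gcongr
        rw [le_div_iff₀ (by positivity), mul_comm]
        exact hmarkov

end Moments

lemma abs_eq_one_of_sq_eq_one {a : ℝ} (h : a ^ 2 = 1) : |a| = 1 := by
  rcases sq_eq_one_iff.1 h with rfl | rfl <;> simp

section Row

variable {Ω α : Type*} {w : ℕ}

noncomputable def rowTerm (f : α → ℝ) (x : α) (H : α → Ω → Fin w) (G : α → Ω → ℝ) (y : α)
    (ω : Ω) : ℝ :=
  f y * G y ω * if H y ω = H x ω then 1 else 0

noncomputable def rowEstimate [Fintype α] (f : α → ℝ) (x : α) (H : α → Ω → Fin w)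
    (G : α → Ω → ℝ) (ω : Ω) : ℝ :=
  G x ω * ∑ y, rowTerm f x H G y ω

lemma measurable_rowTerm {m : MeasurableSpace Ω} (f : α → ℝ) (x : α) {H : α → Ω → Fin w}
    {G : α → Ω → ℝ} (hH : ∀ y, Measurable[m] (H y)) (hG : ∀ y, Measurable[m] (G y)) (y : α) :
    Measurable[m] (rowTerm f x H G y) :=
  ((hG y).const_mul (f y)).mul
    (Measurable.ite (measurableSet_eq_fun (hH y) (hH x)) measurable_const measurable_const)

lemma measurable_rowEstimate [Fintype α] {m : MeasurableSpace Ω} (f : α → ℝ) (x : α)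
    {H : α → Ω → Fin w} {G : α → Ω → ℝ} (hH : ∀ y, Measurable[m] (H y))
    (hG : ∀ y, Measurable[m] (G y)) :
    Measurable[m] (rowEstimate f x H G) :=
  (hG x).mul (Finset.measurable_fun_sum _ fun y _ => measurable_rowTerm f x hH hG y)

lemma rowEstimate_sub_eq [Fintype α] [DecidableEq α] (f : α → ℝ) (x : α) (H : α → Ω → Fin w)
    (G : α → Ω → ℝ) {ω : Ω} (hx : G x ω ^ 2 = 1) :
    rowEstimate f x H G ω - f x = G x ω * ∑ y ∈ univ.erase x, rowTerm f x H G y ω := by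
  rw [rowEstimate, ← Finset.add_sum_erase _ _ (mem_univ x), rowTerm, if_pos rfl, mul_add]
  linear_combination f x * hx

lemma abs_rowTerm_le (f : α → ℝ) (x : α) (H : α → Ω → Fin w) (G : α → Ω → ℝ) {y : α} {ω : Ω}
    (hy : G y ω ^ 2 = 1) : |rowTerm f x H G y ω| ≤ |f y| := by
  rw [rowTerm, abs_mul, abs_mul, abs_eq_one_of_sq_eq_one hy, mul_one]
  split_ifs <;> simp

lemma rowTerm_sq (f : α → ℝ) (x : α) (H : α → Ω → Fin w) (G : α → Ω → ℝ) {y : α} {ω : Ω}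
    (hy : G y ω ^ 2 = 1) :
    rowTerm f x H G y ω ^ 2 = f y ^ 2 * if H y ω = H x ω then 1 else 0 := by
  rw [rowTerm, mul_pow, mul_pow, hy]
  split_ifs <;> simp

end Row

section Vars

variable {Ω : Type*} {ι : Type} {w : ℕ} {H : ι → Ω → Fin w} {G : ι → Ω → ℝ}

lemma measurable_iSup_comap_vars_inl {T : Set (ι ⊕ ι)} {p : ι} (hp : .inl p ∈ T) :
    Measurable[⨆ i ∈ T, MeasurableSpace.comap (Vars H G i) inferInstance] (H p) :=
  measurable_iSup_comap (Vars H G) hp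

lemma measurable_iSup_comap_vars_inr {T : Set (ι ⊕ ι)} {p : ι} (hp : .inr p ∈ T) :
    Measurable[⨆ i ∈ T, MeasurableSpace.comap (Vars H G i) inferInstance] (G p) :=
  measurable_iSup_comap (Vars H G) hp

variable [MeasurableSpace Ω]

lemma measurable_of_measurable_vars_inl (hmeas : ∀ i, Measurable (Vars H G i)) (p : ι) :
    Measurable (H p) :=
  hmeas (.inl p)

lemma measurable_of_measurable_vars_inr (hmeas : ∀ i, Measurable (Vars H G i)) (p : ι) :
    Measurable (G p) :=
  hmeas (.inr p)

end Vars

section CountSketchRow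

variable {Ω : Type*} [MeasurableSpace Ω] {P : Measure Ω} {ι : Type} {w : ℕ}
  {H : ι → Ω → Fin w} {G : ι → Ω → ℝ} {α : Type*} {k : α → ι}
  (hmeas : ∀ i, Measurable (Vars H G i))
  (hdistg : ∀ p, P.map (G p) = (2 : ℝ≥0∞)⁻¹ • (Measure.dirac 1 + Measure.dirac (-1)))
include hmeas hdistg

lemma ae_forall_abs_rowTerm_le [Countable α] (f : α → ℝ) (x : α) :
    ∀ᵐ ω ∂P, ∀ y, |rowTerm f x (fun a => H (k a)) (fun a => G (k a)) y ω| ≤ |f y| :=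
  ae_all_iff.2 fun y => (ae_sq_eq_one_of_map_eq_rademacher
    (measurable_of_measurable_vars_inr hmeas (k y)) (hdistg (k y))).mono
      fun _ hω => abs_rowTerm_le _ _ _ _ hω

lemma integrable_rowTerm_mul_rowTerm [IsFiniteMeasure P] [Countable α] (f : α → ℝ)
    (x y z : α) :
    Integrable (fun ω => rowTerm f x (fun a => H (k a)) (fun a => G (k a)) y ω
      * rowTerm f x (fun a => H (k a)) (fun a => G (k a)) z ω) P := by
  have hm := measurable_rowTerm f x (fun a => measurable_of_measurable_vars_inl hmeas (k a))
    (fun a => measurable_of_measurable_vars_inr hmeas (k a))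
  refine Integrable.of_bound ((hm y).mul (hm z)).aestronglyMeasurable (|f y| * |f z|) ?_
  filter_upwards [ae_forall_abs_rowTerm_le hmeas hdistg f x] with ω hω
  rw [Real.norm_eq_abs, abs_mul]
  exact mul_le_mul (hω y) (hω z) (abs_nonneg _) (abs_nonneg _)

/-- The sign `G (k y)` is independent of everything else in the row, and has mean zero. -/
lemma integral_rowTerm_mul_rowTerm_eq_zero (hindep : iIndepFun (Vars H G) P) (hk : Injective k)
    (f : α → ℝ) (x : α) {y z : α} (hyz : y ≠ z) :
    ∫ ω, rowTerm f x (fun a => H (k a)) (fun a => G (k a)) y ω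
      * rowTerm f x (fun a => H (k a)) (fun a => G (k a)) z ω ∂P = 0 := by
  set I : α → Ω → ℝ := fun a ω => if H (k a) ω = H (k x) ω then 1 else 0
  set W : Ω → ℝ := fun ω => G (k z) ω * (I y ω * I z ω)
  obtain ⟨hindW, hWm⟩ : IndepFun (G (k y)) W P ∧ Measurable W := by
    let mW : MeasurableSpace Ω := ⨆ i ∈ ({.inr (k y)}ᶜ : Set (ι ⊕ ι)),
      MeasurableSpace.comap (Vars H G i) inferInstance
    have hH : ∀ a, Measurable[mW] (H (k a)) := fun a => measurable_iSup_comap_vars_inl (by simp)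
    have hI : ∀ a, Measurable[mW] (I a) := fun a =>
      Measurable.ite (measurableSet_eq_fun (hH a) (hH x)) measurable_const measurable_const
    have hW : Measurable[mW] W :=
      (measurable_iSup_comap_vars_inr (by simpa using hk.ne hyz.symm)).mul ((hI y).mul (hI z))
    exact ⟨indepFun_of_measurable_iSup_compl hmeas hindep (.inr (k y)) hW,
      hW.mono (iSup₂_le fun i _ => (hmeas i).comap_le) le_rfl⟩
  have hsplit : (fun ω => rowTerm f x (fun a => H (k a)) (fun a => G (k a)) y ω
      * rowTerm f x (fun a => H (k a)) (fun a => G (k a)) z ω)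
      = fun ω => f y * f z * (G (k y) * W) ω := by
    ext ω
    simp only [rowTerm, W, I, Pi.mul_apply]
    ring
  have hGm := measurable_of_measurable_vars_inr hmeas (k y)
  rw [hsplit, integral_const_mul,
    hindW.integral_mul_eq_mul_integral hGm.aestronglyMeasurable hWm.aestronglyMeasurable,
    integral_eq_zero_of_map_eq_rademacher hGm (hdistg (k y))]
  simp

variable [IsProbabilityMeasure P] (hindep : iIndepFun (Vars H G) P)
  (hdisth : ∀ p, P.map (H p) = (w : ℝ≥0∞)⁻¹ • Measure.count)
include hindep hdisth

lemma integral_rowTerm_sq (hk : Injective k) (f : α → ℝ) {x y : α} (hyx : y ≠ x) :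
    ∫ ω, rowTerm f x (fun a => H (k a)) (fun a => G (k a)) y ω ^ 2 ∂P = f y ^ 2 / w := by
  have hHy := measurable_of_measurable_vars_inl hmeas (k y)
  have hHx := measurable_of_measurable_vars_inl hmeas (k x)
  have hsq : (fun ω => rowTerm f x (fun a => H (k a)) (fun a => G (k a)) y ω ^ 2)
      =ᵐ[P] fun ω => f y ^ 2 * {ω | H (k y) ω = H (k x) ω}.indicator 1 ω := by
    filter_upwards [ae_sq_eq_one_of_map_eq_rademacher
      (measurable_of_measurable_vars_inr hmeas (k y)) (hdistg (k y))] with ω hω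
    simp [rowTerm_sq f x (fun a => H (k a)) (fun a => G (k a)) hω, Set.indicator_apply]
  have hindH : IndepFun (H (k y)) (H (k x)) P :=
    hindep.indepFun (i := .inl (k y)) (j := .inl (k x)) (by simpa using hk.ne hyx)
  rw [integral_congr_ae hsq, integral_const_mul,
    integral_indicator_one (measurableSet_eq_fun hHy hHx), measureReal_def,
    measure_eq_eq_inv_of_map_eq_uniform hHy hHx hindH (hdisth (k y)), ENNReal.toReal_inv,
    ENNReal.toReal_natCast, div_eq_mul_inv]

lemma integral_rowNoise_sq_le [Fintype α] [DecidableEq α] (hk : Injective k) (f : α → ℝ)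
    (x : α) :
    ∫ ω, (∑ y ∈ univ.erase x, rowTerm f x (fun a => H (k a)) (fun a => G (k a)) y ω) ^ 2 ∂P
      ≤ (∑ y, f y ^ 2) / w := by
  rw [integral_sum_sq_of_orthogonal _ _
      (fun y _ z _ => integrable_rowTerm_mul_rowTerm hmeas hdistg f x y z)
      (fun y _ z _ hyz => integral_rowTerm_mul_rowTerm_eq_zero hmeas hdistg hindep hk f x hyz),
    Finset.sum_div]
  calc ∑ y ∈ univ.erase x, ∫ ω, rowTerm f x (fun a => H (k a)) (fun a => G (k a)) y ω ^ 2 ∂P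
      = ∑ y ∈ univ.erase x, f y ^ 2 / w :=
        Finset.sum_congr rfl fun y hy =>
          integral_rowTerm_sq hmeas hdistg hindep hdisth hk f (Finset.ne_of_mem_erase hy)
    _ ≤ ∑ y, f y ^ 2 / w :=
        Finset.sum_le_sum_of_subset_of_nonneg (Finset.erase_subset _ _) fun _ _ _ => by positivity

lemma measure_lt_abs_rowEstimate_sub_le [Fintype α] (hk : Injective k) (f : α → ℝ) (x : α)
    {t : ℝ} (ht : 0 < t) :
    P {ω | t < |rowEstimate f x (fun a => H (k a)) (fun a => G (k a)) ω - f x|}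
      ≤ ENNReal.ofReal ((∑ y, f y ^ 2) / (w * t ^ 2)) := by
  classical
  set D : Ω → ℝ := fun ω =>
    ∑ y ∈ univ.erase x, rowTerm f x (fun a => H (k a)) (fun a => G (k a)) y ω
  have hD : (fun ω => |rowEstimate f x (fun a => H (k a)) (fun a => G (k a)) ω - f x|)
      =ᵐ[P] fun ω => |D ω| := by
    filter_upwards [ae_sq_eq_one_of_map_eq_rademacher
      (measurable_of_measurable_vars_inr hmeas (k x)) (hdistg (k x))] with ω hω
    rw [rowEstimate_sub_eq f x (fun a => H (k a)) (fun a => G (k a)) hω, abs_mul,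
      abs_eq_one_of_sq_eq_one hω, one_mul]
  have hD2 : Integrable (fun ω => D ω ^ 2) P := by
    simp_rw [D, sq, Finset.sum_mul_sum]
    exact integrable_finsetSum _ fun y _ => integrable_finsetSum _ fun z _ =>
      integrable_rowTerm_mul_rowTerm hmeas hdistg f x y z
  calc P {ω | t < |rowEstimate f x (fun a => H (k a)) (fun a => G (k a)) ω - f x|}
      = P {ω | t < |D ω|} := measure_congr (hD.mono fun ω hω => congrArg (t < ·) hω)
    _ ≤ ENNReal.ofReal ((∫ ω, D ω ^ 2 ∂P) / t ^ 2) := measure_lt_abs_le_integral_sq_div hD2 ht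
    _ ≤ ENNReal.ofReal ((∑ y, f y ^ 2) / w / t ^ 2) := by
        gcongr
        exact integral_rowNoise_sq_le hmeas hdistg hindep hdisth hk f x
    _ = ENNReal.ofReal ((∑ y, f y ^ 2) / (w * t ^ 2)) := by rw [div_div]

end CountSketchRow

lemma iIndepSet_setOf_lt_abs_rowEstimate_sub {Ω : Type*} [MeasurableSpace Ω] {P : Measure Ω}
    {κ α : Type} [Fintype α] {w : ℕ} {H : κ × α → Ω → Fin w} {G : κ × α → Ω → ℝ}
    (hmeas : ∀ i, Measurable (Vars H G i)) (hindep : iIndepFun (Vars H G) P) (f : α → ℝ)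
    (x : α) (t : ℝ) :
    iIndepSet (fun r => {ω | t < |rowEstimate f x (fun y => H (r, y)) (fun y => G (r, y)) ω
      - f x|}) P := by
  refine iIndepSet_of_measurableSet_iSup (fun i => (hmeas i).comap_le)
    ((iIndepFun_iff_iIndep _ _ _).1 hindep) (T := fun r => {i | Sum.elim Prod.fst Prod.fst i = r})
    (fun r s hrs => Set.disjoint_left.2 fun i hr hs => hrs (hr.symm.trans hs)) fun r => ?_
  have hrow : Measurable[⨆ i ∈ {i | Sum.elim Prod.fst Prod.fst i = r},
      MeasurableSpace.comap (Vars H G i) inferInstance]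
      (rowEstimate f x (fun y => H (r, y)) (fun y => G (r, y))) :=
    measurable_rowEstimate f x (fun y => measurable_iSup_comap_vars_inl (p := (r, y)) rfl)
      (fun y => measurable_iSup_comap_vars_inr (p := (r, y)) rfl)
  exact measurable_abs.comp (hrow.sub_const _) measurableSet_Ioi

lemma sum_sq_div_le_one_third {α : Type*} [Fintype α] (f : α → ℕ) {w γ : ℝ} (hwγ : 3 ≤ w * γ ^ 2)
    (hN : 0 < ∑ y, f y) :
    (∑ y, (f y : ℝ) ^ 2) / (w * (γ * ∑ y, (f y : ℝ)) ^ 2) ≤ 1 / 3 := by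
  have hN : (0 : ℝ) < ∑ y, (f y : ℝ) := by exact_mod_cast hN
  set N : ℝ := ∑ y, (f y : ℝ)
  have hsq : ∑ y, (f y : ℝ) ^ 2 ≤ N ^ 2 := sum_sq_le_sq_sum_of_nonneg fun _ _ => Nat.cast_nonneg _
  rw [div_le_iff₀ (by nlinarith [sq_nonneg γ, sq_pos_of_pos hN])]
  nlinarith [sq_pos_of_pos hN]

lemma four_thirds_pow_le_two_pow_mul_exp (m : ℕ) :
    (4 / 3 : ℝ) ^ (2 * m + 1) ≤ 2 ^ (m + 1) * Real.exp (-((2 * m + 1 : ℕ) : ℝ) / 18) := by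
  have h9 : (16 / 9 : ℝ) ≤ 2 * Real.exp (-(1 / 9)) := by
    linarith [Real.add_one_le_exp (-(1 / 9) : ℝ)]
  have h18 : (4 / 3 : ℝ) ≤ 2 * Real.exp (-(1 / 18)) := by
    linarith [Real.add_one_le_exp (-(1 / 18) : ℝ)]
  have hl : (4 / 3 : ℝ) ^ (2 * m + 1) = (16 / 9) ^ m * (4 / 3) := by
    rw [pow_succ, pow_mul]
    norm_num
  have hr : (2 : ℝ) ^ (m + 1) * Real.exp (-((2 * m + 1 : ℕ) : ℝ) / 18)
      = (2 * Real.exp (-(1 / 9))) ^ m * (2 * Real.exp (-(1 / 18))) := by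
    rw [mul_pow, ← Real.exp_nat_mul, pow_succ,
      show -((2 * m + 1 : ℕ) : ℝ) / 18 = m * (-(1 / 9)) + (-(1 / 18)) by push_cast; ring,
      Real.exp_add]
    ring
  rw [hl, hr]
  gcongr

lemma one_add_third_pow_le_two_pow_mul_exp (m : ℕ) :
    (1 + ENNReal.ofReal (1 / 3)) ^ (2 * m + 1)
      ≤ 2 ^ (m + 1) * ENNReal.ofReal (Real.exp (-((2 * m + 1 : ℕ) : ℝ) / 18)) := by
  rw [← ENNReal.ofReal_one, ← ENNReal.ofReal_add zero_le_one (by norm_num),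
    ← ENNReal.ofReal_pow (by norm_num), ← ENNReal.ofReal_ofNat 2, ← ENNReal.ofReal_pow zero_le_two,
    ← ENNReal.ofReal_mul (by positivity)]
  refine ENNReal.ofReal_le_ofReal ?_
  convert four_thirds_pow_le_two_pow_mul_exp m using 2
  norm_num

theorem stmt15_general {Ω : Type*} [MeasurableSpace Ω] (P : Measure Ω) [IsProbabilityMeasure P]
    (m U w : ℕ)
    (γ : ℝ) (hγ : γ ∈ Set.Ioo (0 : ℝ) 1) (hwγ : 3 ≤ w * γ ^ 2)
    (f : Fin U → ℕ) (N : ℕ) (hN : N = ∑ y : Fin U, f y) (hN1 : 1 ≤ N)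
    (x : Fin U)
    (h : Fin (2 * m + 1) × Fin U → Ω → Fin w)
    (g : Fin (2 * m + 1) × Fin U → Ω → ℝ)
    (hmeas : ∀ i, Measurable (Vars h g i))
    (hindep : iIndepFun (Vars h g) P)
    (hdisth : ∀ p, Measure.map (h p) P = (w : ℝ≥0∞)⁻¹ • Measure.count)
    (hdistg : ∀ p, Measure.map (g p) P
      = (2 : ℝ≥0∞)⁻¹ • (Measure.dirac (1 : ℝ) + Measure.dirac (-1 : ℝ)))
    (ftilde : Ω → ℝ)
    (hft : ∀ ω, ftilde ω = median (fun r : Fin (2 * m + 1) =>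
      g (r, x) ω * ∑ y : Fin U, (f y : ℝ) * g (r, y) ω
        * (if h (r, y) ω = h (r, x) ω then 1 else 0))) :
    P {ω | γ * N < |ftilde ω - (f x : ℝ)|}
      ≤ ENNReal.ofReal (Real.exp (-((2 * m + 1 : ℕ) : ℝ) / 18)) := by
  classical
  set A : Fin (2 * m + 1) → Set Ω := fun r => {ω | γ * N <
    |rowEstimate (fun y => (f y : ℝ)) x (fun y => h (r, y)) (fun y => g (r, y)) ω - f x|}
  have hrow : ∀ r, P (A r) ≤ ENNReal.ofReal (1 / 3) := fun r =>
    (measure_lt_abs_rowEstimate_sub_le hmeas hdistg hindep hdisth (Prod.mk_right_injective r) _ x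
      (mul_pos hγ.1 (by exact_mod_cast hN1))).trans
      (ENNReal.ofReal_le_ofReal (by subst hN; exact_mod_cast sum_sq_div_le_one_third f hwγ hN1))
  have hAm : ∀ r, MeasurableSet (A r) := fun r =>
    measurable_abs.comp ((measurable_rowEstimate _ x
      (fun y => measurable_of_measurable_vars_inl hmeas _)
      (fun y => measurable_of_measurable_vars_inr hmeas _)).sub_const _) measurableSet_Ioi
  have hmedian : {ω | γ * N < |ftilde ω - f x|} ⊆ {ω | m + 1 ≤ #{r | ω ∈ A r}} :=
    fun ω (hω : γ * N < |ftilde ω - f x|) => by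
      rw [hft ω] at hω
      show m + 1 ≤ #{r | ω ∈ A r}
      convert le_card_filter_lt_abs_sub_of_lt_abs_median_sub _ hω using 2
      ext r
      simp [A, rowEstimate, rowTerm]
  have hmajority := pow_mul_measure_le_card_filter_mem_le hAm
    (iIndepSet_setOf_lt_abs_rowEstimate_sub hmeas hindep _ x _) hrow (m + 1)
  rw [Fintype.card_fin] at hmajority
  rw [← ENNReal.mul_le_mul_iff_right (pow_ne_zero _ two_ne_zero)
    (ENNReal.pow_ne_top ENNReal.ofNat_ne_top)]
  calc 2 ^ (m + 1) * P {ω | γ * N < |ftilde ω - f x|}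
      ≤ 2 ^ (m + 1) * P {ω | m + 1 ≤ #{r | ω ∈ A r}} := by gcongr
    _ ≤ 2 ^ (m + 1) * ENNReal.ofReal (Real.exp (-((2 * m + 1 : ℕ) : ℝ) / 18)) :=
      hmajority.trans (one_add_third_pow_le_two_pow_mul_exp m)

/-- For a CountSketch with an odd number `d = 2m+1` of rows and `w` columns
with `w·γ² ≥ 3`, under fully random i.i.d. hashes and signs, the median estimate satisfies
`P(|f̃(x) - f(x)| > γ·N) ≤ exp(-d/18)`. -/
theorem stmt15 {Ω : Type*} [MeasurableSpace Ω] (P : Measure Ω) [IsProbabilityMeasure P]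
    (m U w : ℕ) (hU : 1 ≤ U) (hw : 1 ≤ w)
    (γ : ℝ) (hγ : γ ∈ Set.Ioo (0 : ℝ) 1) (hwγ : 3 ≤ w * γ ^ 2)
    (f : Fin U → ℕ) (N : ℕ) (hN : N = ∑ y : Fin U, f y) (hN1 : 1 ≤ N)
    (x : Fin U)
    (h : Fin (2 * m + 1) × Fin U → Ω → Fin w)
    (g : Fin (2 * m + 1) × Fin U → Ω → ℝ)
    (hmeas : ∀ i, Measurable (Vars h g i))
    (hindep : iIndepFun (Vars h g) P)
    (hdisth : ∀ p, Measure.map (h p) P = (w : ℝ≥0∞)⁻¹ • Measure.count)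
    (hdistg : ∀ p, Measure.map (g p) P
      = (2 : ℝ≥0∞)⁻¹ • (Measure.dirac (1 : ℝ) + Measure.dirac (-1 : ℝ)))
    (ftilde : Ω → ℝ)
    (hft : ∀ ω, ftilde ω = median (fun r : Fin (2 * m + 1) =>
      g (r, x) ω * ∑ y : Fin U, (f y : ℝ) * g (r, y) ω
        * (if h (r, y) ω = h (r, x) ω then 1 else 0))) :
    P {ω | γ * N < |ftilde ω - (f x : ℝ)|}
      ≤ ENNReal.ofReal (Real.exp (-((2 * m + 1 : ℕ) : ℝ) / 18)) :=
  stmt15_general P m U w γ hγ hwγ f N hN hN1 x h g hmeas hindep hdisth hdistg ftilde hft
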